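/- arXiv:1902.04168 — 2 statements merged into one kernel-verified Lean document; each statement's English description precedes it below -/
import Mathlib

section
/- Let x₀, x_D ∈ ℝ³ with x₀ ≠ x_D, let n₀ ∈ ℝ³ be a unit vector with s₀ := ⟪n₀, x₀ − x_D⟫ ≠ 0, set ρ₀ := ‖x₀ − x_D‖, and define f(x) = (ρ₀²/s₀)·(1 − ρ₀/‖x − x_D‖). Then for every x ≠ x_D, the norm of the gradient satisfies ‖∇f(x)‖ · ‖x − x_D‖² = ρ₀³/|s₀|; in particular ‖∇f(x)‖ decays like 1/‖x‖² as ‖x‖ → ∞. -/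
/-! The function `f` is radial about `xD`: `f x = φ ‖x - xD‖` with `φ r = c (1 - ρ₀ / r)` and
`c = ρ₀² / s₀`. By the chain rule a radial function has gradient `φ' r / r • (x - xD)`, here
`φ' r = c ρ₀ / r²`, so `‖∇f x‖ = |c| ρ₀ / r²` and `‖∇f x‖ r² = ρ₀³ / |s₀|`. -/

open scoped RealInnerProductSpace

section

variable {E : Type*} [NormedAddCommGroup E] [InnerProductSpace ℝ E]

theorem hasFDerivAt_norm {x : E} (hx : x ≠ 0) :
    HasFDerivAt (‖·‖) (‖x‖⁻¹ • innerSL ℝ x) x := by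
  have hsqrt : HasDerivAt Real.sqrt (2 * ‖x‖)⁻¹ (‖x‖ ^ 2) := by
    simpa [Real.sqrt_sq (norm_nonneg x), one_div] using
      Real.hasDerivAt_sqrt (pow_ne_zero 2 (norm_ne_zero_iff.mpr hx))
  have hnorm : (‖·‖) = Real.sqrt ∘ fun y : E => ‖y‖ ^ 2 := by
    funext y; simp
  rw [hnorm]
  refine (hsqrt.comp_hasFDerivAt x (hasStrictFDerivAt_norm_sq x).hasFDerivAt).congr_fderiv ?_
  rw [← Nat.cast_smul_eq_nsmul ℝ, smul_smul]
  congr 1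
  field_simp
  norm_num

variable [CompleteSpace E]

theorem HasDerivAt.hasGradientAt_comp_norm_sub {φ : ℝ → ℝ} {φ' : ℝ} {a x : E}
    (hφ : HasDerivAt φ φ' ‖x - a‖) (hx : x ≠ a) :
    HasGradientAt (fun y => φ ‖y - a‖) ((φ' / ‖x - a‖) • (x - a)) x := by
  rw [hasGradientAt_iff_hasFDerivAt]
  refine (hφ.comp_hasFDerivAt x ((hasFDerivAt_norm (sub_ne_zero.mpr hx)).comp x
    ((hasFDerivAt_id x).sub_const a))).congr_fderiv ?_
  ext y
  simp [InnerProductSpace.toDual_apply_apply]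
  ring

theorem hasGradientAt_const_mul_one_sub_div_norm_sub (c ρ : ℝ) {a x : E} (hx : x ≠ a) :
    HasGradientAt (fun y => c * (1 - ρ / ‖y - a‖))
      ((c * ρ / ‖x - a‖ ^ 3) • (x - a)) x := by
  have hr : ‖x - a‖ ≠ 0 := norm_ne_zero_iff.mpr (sub_ne_zero.mpr hx)
  have hφ : HasDerivAt (fun r => c * (1 - ρ / r)) (c * ρ / ‖x - a‖ ^ 2) ‖x - a‖ := by
    simp only [div_eq_mul_inv ρ]
    exact ((((hasDerivAt_inv hr).const_mul ρ).const_sub 1).const_mul c).congr_deriv (by ring)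
  convert hφ.hasGradientAt_comp_norm_sub hx using 2
  field_simp

end

theorem stmt3_general (x₀ xD : EuclideanSpace ℝ (Fin 3))
    (s₀ ρ₀ : ℝ) (hρ₀ : ρ₀ = ‖x₀ - xD‖)
    (f : EuclideanSpace ℝ (Fin 3) → ℝ)
    (hf : f = fun x => (ρ₀ ^ 2 / s₀) * (1 - ρ₀ / ‖x - xD‖)) :
    ∀ x : EuclideanSpace ℝ (Fin 3), x ≠ xD →
      ‖gradient f x‖ * ‖x - xD‖ ^ 2 = ρ₀ ^ 3 / |s₀| := by
  intro x hx
  have hρ₀_nonneg : 0 ≤ ρ₀ := hρ₀ ▸ norm_nonneg _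
  have hr : ‖x - xD‖ ≠ 0 := norm_ne_zero_iff.mpr (sub_ne_zero.mpr hx)
  rw [hf, (hasGradientAt_const_mul_one_sub_div_norm_sub _ ρ₀ hx).gradient, norm_smul,
    Real.norm_eq_abs, abs_div, abs_mul, abs_div, abs_pow, abs_pow, abs_norm,
    abs_of_nonneg hρ₀_nonneg]
  field_simp

theorem stmt3 (x₀ xD n₀ : EuclideanSpace ℝ (Fin 3)) (hx : x₀ ≠ xD) (hn₀ : ‖n₀‖ = 1)
    (s₀ ρ₀ : ℝ) (hs₀def : s₀ = ⟪n₀, x₀ - xD⟫) (hs₀ : s₀ ≠ 0) (hρ₀ : ρ₀ = ‖x₀ - xD‖)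
    (f : EuclideanSpace ℝ (Fin 3) → ℝ)
    (hf : f = fun x => (ρ₀ ^ 2 / s₀) * (1 - ρ₀ / ‖x - xD‖)) :
    ∀ x : EuclideanSpace ℝ (Fin 3), x ≠ xD →
      ‖gradient f x‖ * ‖x - xD‖ ^ 2 = ρ₀ ^ 3 / |s₀| :=
  stmt3_general x₀ xD s₀ ρ₀ hρ₀ f hf
end

section
/- Let z_D, r₀, z₀, n_r0, n_z0, φ₀, β ∈ ℝ with n_r0² + n_z0² = 1. Set x_D := (0,0,z_D), x₀ := (r₀, 0, z₀) in ℝ³, assume x₀ ≠ x_D, set ρ₀ := √(r₀² + (z₀ − z_D)²) and s₀ := r₀·n_r0 + (z₀ − z_D)·n_z0, and assume s₀ ≠ 0. Define ψ(x) = φ₀ + β·(ρ₀²/s₀)·(1 − ρ₀/‖x − x_D‖). Then for all r, θ, z, n_r, n_z ∈ ℝ with (r,z) ≠ (0, z_D), writing x = (r·cos θ, r·sin θ, z), n = (n_r·cos θ, n_r·sin θ, n_z), ρ := √(r² + (z − z_D)²) and s := r·n_r + (z − z_D)·n_z, the directional derivative of ψ satisfies ⟪∇ψ(x), n⟫ =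 β·(ρ₀/ρ)³·(s/s₀). -/
open scoped RealInnerProductSpace
open Real

/-! ψ is an affine function of `‖x - x_D‖⁻¹`, whose gradient is `-(x - x_D) / ‖x - x_D‖³`.
Because `x_D` lies on the axis, `x - x_D` and `n` are cylindrical vectors at the same angle `θ`,
so their inner product `r n_r + (z - z_D) n_z` and the distance `ρ` are independent of `θ`. -/

section InverseDistance

variable {E : Type*} [NormedAddCommGroup E] [InnerProductSpace ℝ E]

lemma hasFDerivAt_norm_sub {c x : E} (hx : x ≠ c) :
    HasFDerivAt (fun y => ‖y - c‖) (‖x - c‖⁻¹ • innerSL ℝ (x - c)) x := by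
  have hnorm : ‖x - c‖ ≠ 0 := norm_ne_zero_iff.mpr (sub_ne_zero.mpr hx)
  have hsqrt := ((hasFDerivAt_id x).sub_const c).norm_sq.sqrt (pow_ne_zero 2 hnorm)
  simp only [id, sqrt_sq (norm_nonneg _)] at hsqrt
  refine hsqrt.congr_fderiv ?_
  ext v
  simp only [one_div, mul_inv_rev, ContinuousLinearMap.comp_id, smul_apply,
    coe_innerSL_apply, nsmul_eq_mul, Nat.cast_ofNat, smul_eq_mul]
  field_simp

lemma hasFDerivAt_inv_norm_sub {c x : E} (hx : x ≠ c) :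
    HasFDerivAt (fun y => ‖y - c‖⁻¹) (-(‖x - c‖ ^ 3)⁻¹ • innerSL ℝ (x - c)) x := by
  have hnorm : ‖x - c‖ ≠ 0 := norm_ne_zero_iff.mpr (sub_ne_zero.mpr hx)
  refine ((hasDerivAt_inv hnorm).comp_hasFDerivAt x (hasFDerivAt_norm_sub hx)).congr_fderiv ?_
  ext v
  simp only [neg_smul, neg_apply, smul_apply, coe_innerSL_apply, smul_eq_mul, neg_inj]
  ring

lemma inner_gradient_const_add_mul_one_sub_div_norm_sub [CompleteSpace E]
    (a b k : ℝ) {c x : E} (hx : x ≠ c) (v : E) :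
    ⟪gradient (fun y => a + b * (1 - k / ‖y - c‖)) x, v⟫ = b * k * ⟪x - c, v⟫ / ‖x - c‖ ^ 3 := by
  simp only [div_eq_mul_inv k]
  have hf := (((hasFDerivAt_inv_norm_sub hx).const_mul k).const_sub 1).const_mul b |>.const_add a
  rw [inner_gradient_left, hf.fderiv]
  simp only [neg_smul, smul_neg, neg_neg, smul_apply, coe_innerSL_apply, smul_eq_mul]
  ring

end InverseDistance

section Cylindrical

noncomputable def cylindrical (r θ z : ℝ) : EuclideanSpace ℝ (Fin 3) :=
  (WithLp.equiv 2 (Fin 3 → ℝ)).symm ![r * cos θ, r * sin θ, z]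

lemma cylindrical_zero_left (θ z : ℝ) :
    cylindrical 0 θ z = (WithLp.equiv 2 (Fin 3 → ℝ)).symm ![0, 0, z] := by
  simp [cylindrical]

lemma cylindrical_sub (r r' θ z z' : ℝ) :
    cylindrical r θ z - cylindrical r' θ z' = cylindrical (r - r') θ (z - z') := by
  ext i
  fin_cases i <;> simp [cylindrical, sub_mul]

lemma inner_cylindrical (r r' θ z z' : ℝ) :
    ⟪cylindrical r θ z, cylindrical r' θ z'⟫ = r * r' + z * z' := by
  simp only [cylindrical, PiLp.inner_apply, WithLp.equiv_symm_apply, Fin.sum_univ_three,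
    Matrix.cons_val_zero, Matrix.cons_val_one, Matrix.cons_val_two, Matrix.head_cons,
    Matrix.tail_cons, RCLike.inner_apply, conj_trivial]
  linear_combination (r * r') * sin_sq_add_cos_sq θ

lemma norm_cylindrical (r θ z : ℝ) : ‖cylindrical r θ z‖ = √(r ^ 2 + z ^ 2) := by
  rw [norm_eq_sqrt_real_inner, inner_cylindrical, sq, sq]

end Cylindrical

theorem stmt6_general (zD φ₀ β : ℝ)
    (xD : EuclideanSpace ℝ (Fin 3))
    (hxD : xD = (WithLp.equiv 2 (Fin 3 → ℝ)).symm ![0, 0, zD])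
    (ρ₀ s₀ : ℝ)
    (ψ : EuclideanSpace ℝ (Fin 3) → ℝ)
    (hψ : ψ = fun x => φ₀ + β * ((ρ₀ ^ 2 / s₀) * (1 - ρ₀ / ‖x - xD‖))) :
    ∀ r θ z nr nz : ℝ, (r, z) ≠ (0, zD) →
      ⟪gradient ψ ((WithLp.equiv 2 (Fin 3 → ℝ)).symm ![r * Real.cos θ, r * Real.sin θ, z]),
        (WithLp.equiv 2 (Fin 3 → ℝ)).symm ![nr * Real.cos θ, nr * Real.sin θ, nz]⟫ =
      β * (ρ₀ / Real.sqrt (r ^ 2 + (z - zD) ^ 2)) ^ 3 *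
        ((r * nr + (z - zD) * nz) / s₀) := by
  intro r θ z nr nz hrz
  change ⟪gradient ψ (cylindrical r θ z), cylindrical nr θ nz⟫ = _
  have hsub : cylindrical r θ z - xD = cylindrical r θ (z - zD) := by
    rw [hxD, ← cylindrical_zero_left θ, cylindrical_sub, sub_zero]
  have hdist_pos : 0 < r ^ 2 + (z - zD) ^ 2 := by
    rw [Ne, Prod.ext_iff, not_and_or] at hrz
    rcases hrz with hr | hz
    · positivity
    · have : z - zD ≠ 0 := sub_ne_zero.mpr hz
      positivity
  have hx_ne : cylindrical r θ z ≠ xD := by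
    rw [← sub_ne_zero, ← norm_ne_zero_iff, hsub, norm_cylindrical]
    exact (sqrt_pos.mpr hdist_pos).ne'
  simp only [← mul_assoc] at hψ
  rw [hψ, inner_gradient_const_add_mul_one_sub_div_norm_sub _ _ _ hx_ne, hsub, inner_cylindrical,
    norm_cylindrical]
  ring

theorem stmt6 (zD r₀ z₀ nr0 nz0 φ₀ β : ℝ) (hn : nr0 ^ 2 + nz0 ^ 2 = 1)
    (xD x₀ : EuclideanSpace ℝ (Fin 3))
    (hxD : xD = (WithLp.equiv 2 (Fin 3 → ℝ)).symm ![0, 0, zD])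
    (hx₀ : x₀ = (WithLp.equiv 2 (Fin 3 → ℝ)).symm ![r₀, 0, z₀])
    (hne : x₀ ≠ xD)
    (ρ₀ s₀ : ℝ) (hρ₀ : ρ₀ = Real.sqrt (r₀ ^ 2 + (z₀ - zD) ^ 2))
    (hs₀def : s₀ = r₀ * nr0 + (z₀ - zD) * nz0) (hs₀ : s₀ ≠ 0)
    (ψ : EuclideanSpace ℝ (Fin 3) → ℝ)
    (hψ : ψ = fun x => φ₀ + β * ((ρ₀ ^ 2 / s₀) * (1 - ρ₀ / ‖x - xD‖))) :
    ∀ r θ z nr nz : ℝ, (r, z) ≠ (0, zD) →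
      ⟪gradient ψ ((WithLp.equiv 2 (Fin 3 → ℝ)).symm ![r * Real.cos θ, r * Real.sin θ, z]),
        (WithLp.equiv 2 (Fin 3 → ℝ)).symm ![nr * Real.cos θ, nr * Real.sin θ, nz]⟫ =
      β * (ρ₀ / Real.sqrt (r ^ 2 + (z - zD) ^ 2)) ^ 3 *
        ((r * nr + (z - zD) * nz) / s₀) :=
  stmt6_general zD φ₀ β xD hxD ρ₀ s₀ ψ hψ
end
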